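/- arXiv:2111.10702 — 6 statements merged into one kernel-verified Lean document; each statement's English description precedes it below -/
import Mathlib

section
/- For every nonnegative integer n, (-1)^n * Q_0(n) = pod_e(n) - pod_o(n), where Q_0(n) counts partitions of n into distinct parts not congruent to 0 mod 4, and pod_e(n) (resp. pod_o(n)) counts partitions of n into an even (resp. odd) number of parts none of which is congruent to 2 mod 4. -/
/-!
With suitable characters, `Nat.Partition.genFun` turns the two sides into
`∑ (-1)ⁿ Q₀(n) qⁿ = ∏_{4 ∤ m} (1 + (-q)ᵐ)` and `∑ (pod_e(n) - pod_o(n)) qⁿ = ∏_{m ≢ 2 (4)} (1 + qᵐ)⁻¹`.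
Pairing factors, the first series times `∏_{m ≢ 2 (4)} (1 + qᵐ)` is
`∏_{m odd} (1 - q²ᵐ) ∏_{m even} (1 + qᵐ)`, which is Euler's identity
`∏_{m odd} (1 - xᵐ) ∏_m (1 + xᵐ) = 1` at `x = q²`. Everything is compared modulo `qⁿ⁺¹`, where
only the factors with `m ≤ n` matter and `q` is nilpotent.
-/

/-- `Q0 n`: number of partitions of `n` into distinct parts none divisible by 4. -/
noncomputable def Q0 (n : ℕ) : ℕ :=
  Nat.card {p : n.Partition // p.parts.Nodup ∧ ∀ x ∈ p.parts, ¬ (4 ∣ x)}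

/-- `podE n`: partitions of `n` with an even number of parts, no part ≡ 2 (mod 4). -/
noncomputable def podE (n : ℕ) : ℕ :=
  Nat.card {p : n.Partition // Even (Multiset.card p.parts) ∧ ∀ x ∈ p.parts, x % 4 ≠ 2}

/-- `podO n`: partitions of `n` with an odd number of parts, no part ≡ 2 (mod 4). -/
noncomputable def podO (n : ℕ) : ℕ :=
  Nat.card {p : n.Partition // Odd (Multiset.card p.parts) ∧ ∀ x ∈ p.parts, x % 4 ≠ 2}

open Finset PowerSeries
open scoped PowerSeries.WithPiTopology

section Nilpotent

variable {S : Type*} [CommRing S]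

theorem prod_Icc_filter_even {M : Type*} [CommMonoid M] (g : ℕ → M) (N : ℕ) :
    ∏ m ∈ (Icc 1 N).filter Even, g m = ∏ k ∈ Icc 1 (N / 2), g (2 * k) := by
  have : (Icc 1 N).filter Even = (Icc 1 (N / 2)).image (2 * ·) := by
    ext m
    simp only [mem_filter, mem_Icc, mem_image, even_iff_two_dvd]
    constructor
    · rintro ⟨⟨h1, h2⟩, k, rfl⟩
      exact ⟨k, ⟨by omega, by omega⟩, rfl⟩
    · rintro ⟨k, ⟨h1, h2⟩, rfl⟩
      exact ⟨⟨by omega, by omega⟩, dvd_mul_right 2 k⟩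
  rw [this, prod_image fun a _ b _ h => by simpa using h]

theorem sq_pow_half_succ_eq_zero {M₀ : Type*} [MonoidWithZero M₀] {y : M₀} {N : ℕ} (hy : y ^ (N + 1) = 0) :
    (y ^ 2) ^ (N / 2 + 1) = 0 := by
  rw [← pow_mul]
  exact pow_eq_zero_of_le (by omega) hy

theorem prod_one_sub_pow_of_subset {z : S} {M : ℕ} (hz : z ^ (M + 1) = 0) {s t : Finset ℕ}
    (hst : s ⊆ t) (hlt : ∀ m ∈ t, m ∉ s → M < m) :
    ∏ m ∈ t, (1 - z ^ m) = ∏ m ∈ s, (1 - z ^ m) :=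
  (prod_subset hst fun m hm hm' => by rw [pow_eq_zero_of_le (hlt m hm hm') hz, sub_zero]).symm

/-- Euler's identity, for a nilpotent `y`. -/
theorem prod_odd_one_sub_pow_mul_prod_one_add_pow {y : S} {N : ℕ} (hy : y ^ (N + 1) = 0) :
    (∏ m ∈ (Icc 1 N).filter Odd, (1 - y ^ m)) * ∏ m ∈ Icc 1 N, (1 + y ^ m) = 1 := by
  set u := ∏ m ∈ (Icc 1 N).filter Even, (1 - y ^ m)
  have hu : IsUnit u := IsUnit.prod_iff.2 fun m hm =>
    (IsNilpotent.pow_of_pos ⟨N + 1, hy⟩ (by simp only [mem_filter, mem_Icc] at hm; omega)).isUnit_one_sub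
  have hy2 := sq_pow_half_succ_eq_zero hy
  refine hu.mul_left_cancel ?_
  calc u * ((∏ m ∈ (Icc 1 N).filter Odd, (1 - y ^ m)) * ∏ m ∈ Icc 1 N, (1 + y ^ m))
      = ∏ m ∈ Icc 1 N, (1 - (y ^ 2) ^ m) := by
        simp_rw [u, ← mul_assoc, ← Nat.not_even_iff_odd, prod_filter_mul_prod_filter_not,
          ← prod_mul_distrib]
        exact prod_congr rfl fun m _ => by ring
    _ = ∏ m ∈ Icc 1 (N / 2), (1 - (y ^ 2) ^ m) :=
        prod_one_sub_pow_of_subset hy2 (Icc_subset_Icc_right (Nat.div_le_self N 2))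
          fun m hm hm' => by rw [mem_Icc] at hm hm'; omega
    _ = u * 1 := by simp_rw [mul_one, u, prod_Icc_filter_even, pow_mul]

theorem prod_one_add_neg_pow_mul_prod_one_add_pow_eq_one {y : S} {N : ℕ}
    (hy : y ^ (N + 1) = 0) :
    (∏ m ∈ Icc 1 N, if 4 ∣ m then 1 else 1 + (-y) ^ m) *
      ∏ m ∈ Icc 1 N, (if m % 4 = 2 then 1 else 1 + y ^ m) = 1 := by
  have hfactor : ∀ m, (if 4 ∣ m then 1 else 1 + (-y) ^ m) * (if m % 4 = 2 then 1 else 1 + y ^ m)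
      = if Even m then 1 + y ^ m else 1 - (y ^ 2) ^ m := by
    intro m
    rcases Nat.even_or_odd m with hm | hm
    · rw [if_pos hm, hm.neg_pow]
      by_cases h4 : 4 ∣ m
      · rw [if_pos h4, if_neg (by omega), one_mul]
      · rw [if_neg h4, if_pos (by rcases hm with ⟨k, rfl⟩; omega), mul_one]
    · have h4 : ¬ 4 ∣ m := by rcases hm with ⟨k, rfl⟩; omega
      have h2 : m % 4 ≠ 2 := by rcases hm with ⟨k, rfl⟩; omega
      rw [if_neg h4, if_neg h2, if_neg (Nat.not_even_iff_odd.2 hm), hm.neg_pow]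
      ring
  have hy2 := sq_pow_half_succ_eq_zero hy
  rw [← prod_mul_distrib, prod_congr rfl fun m _ => hfactor m, prod_ite, mul_comm,
    prod_Icc_filter_even]
  simp_rw [Nat.not_even_iff_odd, pow_mul]
  rw [prod_one_sub_pow_of_subset hy2
    (filter_subset_filter _ (Icc_subset_Icc_right (Nat.div_le_self N 2))) fun m hm hm' => by
      simp only [mem_filter, mem_Icc] at hm hm'
      by_contra! h
      exact hm' ⟨⟨hm.1.1, h⟩, hm.2⟩]
  exact prod_odd_one_sub_pow_mul_prod_one_add_pow hy2

end Nilpotent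

section Truncation

variable {R : Type*} [CommRing R]

theorem PowerSeries.mk_span_X_pow_eq_iff {N : ℕ} {a b : R⟦X⟧} :
    Ideal.Quotient.mk (Ideal.span {X ^ N}) a = Ideal.Quotient.mk _ b ↔
      ∀ d < N, coeff d a = coeff d b := by
  simp only [Ideal.Quotient.eq, Ideal.mem_span_singleton, X_pow_dvd_iff, map_sub, sub_eq_zero]

theorem PowerSeries.mk_X_pow_eq_zero {N m : ℕ} (h : N < m) :
    Ideal.Quotient.mk (Ideal.span {(X : R⟦X⟧) ^ (N + 1)}) X ^ m = 0 := by
  rw [← map_pow, Ideal.Quotient.eq_zero_iff_mem, Ideal.mem_span_singleton]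
  exact pow_dvd_pow X h

theorem PowerSeries.mk_eq_prod_Icc_of_hasProd [TopologicalSpace R] [T2Space R]
    {F : ℕ → R⟦X⟧} {G : R⟦X⟧} {N : ℕ} (hG : HasProd (fun i ↦ F (i + 1)) G)
    (hF : ∀ m, N < m → Ideal.Quotient.mk (Ideal.span {X ^ (N + 1)}) (F m) = 1) :
    Ideal.Quotient.mk (Ideal.span {X ^ (N + 1)}) G =
      ∏ m ∈ Icc 1 N, Ideal.Quotient.mk _ (F m) := by
  have hstable : ∀ s ⊇ range N, Ideal.Quotient.mk (Ideal.span {X ^ (N + 1)})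
      (∏ i ∈ s, F (i + 1)) = ∏ m ∈ Icc 1 N, Ideal.Quotient.mk _ (F m) := by
    intro s hs
    rw [map_prod, ← prod_subset hs fun i _ hi => hF _ (by simpa using hi), range_eq_Ico,
      prod_Ico_add' (fun m => Ideal.Quotient.mk _ (F m)), zero_add, Ico_add_one_right_eq_Icc]
  rw [← map_prod, mk_span_X_pow_eq_iff]
  intro d hd
  refine tendsto_nhds_unique (((WithPiTopology.continuous_coeff R d).tendsto G).comp hG)
    (tendsto_const_nhds.congr' ?_)
  filter_upwards [Filter.eventually_ge_atTop (range N)] with s hs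
  exact (mk_span_X_pow_eq_iff.1 (by rw [hstable s hs, map_prod]) d hd).symm

end Truncation

/-- Weight of a part `i` occurring with multiplicity `c`, in the sense of `Nat.Partition.genFun`. -/
def q0Weight (i c : ℕ) : ℤ := if c = 1 ∧ ¬ 4 ∣ i then (-1) ^ i else 0

def podWeight (i c : ℕ) : ℤ := if i % 4 ≠ 2 then (-1) ^ c else 0

theorem natCast_card_subtype {α R : Type*} [Fintype α] [AddCommMonoidWithOne R] (P : α → Prop)
    [DecidablePred P] : (Nat.card {x // P x} : R) = ∑ x, if P x then 1 else 0 := by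
  rw [Nat.card_eq_fintype_card, Fintype.card_subtype, natCast_card_filter]

theorem prod_q0Weight {n : ℕ} (p : n.Partition) :
    p.parts.toFinsupp.prod q0Weight
      = if p.parts.Nodup ∧ ∀ x ∈ p.parts, ¬ 4 ∣ x then (-1) ^ n else 0 := by
  classical
  unfold q0Weight
  rw [Finsupp.prod, prod_ite_zero]
  simp only [Multiset.toFinsupp_support, Multiset.toFinsupp_apply]
  refine ite_congr (by simp [Multiset.nodup_iff_count_eq_one, forall_and]) (fun h => ?_)
    fun _ => rfl
  rw [prod_pow_eq_pow_sum, sum_eq_multiset_sum, Multiset.toFinset_val, h.1.dedup,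
    Multiset.map_id', p.parts_sum]

theorem coeff_genFun_q0Weight (n : ℕ) :
    coeff n (Nat.Partition.genFun q0Weight) = (-1) ^ n * Q0 n := by
  classical
  simp_rw [Nat.Partition.coeff_genFun, prod_q0Weight, Q0, natCast_card_subtype, mul_sum, mul_ite,
    mul_one, mul_zero]

theorem prod_podWeight {n : ℕ} (p : n.Partition) :
    p.parts.toFinsupp.prod podWeight
      = if ∀ x ∈ p.parts, x % 4 ≠ 2 then (-1) ^ Multiset.card p.parts else 0 := by
  classical
  simp only [Finsupp.prod, Multiset.toFinsupp_support, Multiset.toFinsupp_apply, podWeight,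
    prod_ite_zero, Multiset.mem_toFinset, prod_pow_eq_pow_sum, Multiset.toFinset_sum_count_eq]

theorem coeff_genFun_podWeight (n : ℕ) :
    coeff n (Nat.Partition.genFun podWeight) = (podE n : ℤ) - podO n := by
  classical
  simp_rw [Nat.Partition.coeff_genFun, prod_podWeight, podE, podO, natCast_card_subtype,
    ← sum_sub_distrib]
  refine sum_congr rfl fun p _ => ?_
  by_cases hA : ∀ x ∈ p.parts, x % 4 ≠ 2
  · rcases Nat.even_or_odd (Multiset.card p.parts) with h | h
    · simp [if_pos hA, h, h.neg_one_pow, Nat.not_odd_iff_even.2 h]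
    · simp [if_pos hA, h, h.neg_one_pow, Nat.not_even_iff_odd.2 h]
  · simp [hA]

theorem one_add_tsum_q0Weight (m : ℕ) :
    1 + ∑' j, q0Weight m (j + 1) • (X : ℤ⟦X⟧) ^ (m * (j + 1))
      = if 4 ∣ m then 1 else 1 + (-X) ^ m := by
  rw [tsum_eq_single 0 fun j hj => by simp [q0Weight, hj]]
  split_ifs with h
  · simp [q0Weight, h]
  · simp [q0Weight, h, neg_pow (X : ℤ⟦X⟧), zsmul_eq_mul]

theorem one_add_tsum_podWeight_mul {m : ℕ} (hm : 0 < m) :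
    (1 + ∑' j, podWeight m (j + 1) • (X : ℤ⟦X⟧) ^ (m * (j + 1))) *
      (if m % 4 = 2 then 1 else 1 + X ^ m) = 1 := by
  split_ifs with h
  · simp [podWeight, h]
  · have hX : constantCoeff (-(X : ℤ⟦X⟧) ^ m) = 0 := by simp [hm.ne']
    have hgeom : 1 + ∑' j, podWeight m (j + 1) • (X : ℤ⟦X⟧) ^ (m * (j + 1))
        = ∑' j, (-X ^ m) ^ j := by
      rw [tsum_eq_zero_add' ((WithPiTopology.summable_pow_of_constantCoeff_eq_zero hX).comp_injective
        (add_left_injective 1)), pow_zero]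
      congr 1
      refine tsum_congr fun j => ?_
      simp [podWeight, h, neg_pow (X ^ m : ℤ⟦X⟧), pow_mul, zsmul_eq_mul]
    rw [hgeom, ← sub_neg_eq_add, WithPiTopology.tsum_pow_mul_one_sub_of_constantCoeff_eq_zero hX]

theorem mk_genFun_q0Weight_mul (N : ℕ) :
    Ideal.Quotient.mk (Ideal.span {(X : ℤ⟦X⟧) ^ (N + 1)}) (Nat.Partition.genFun q0Weight) *
      ∏ m ∈ Icc 1 N, (if m % 4 = 2 then 1 else 1 + Ideal.Quotient.mk _ X ^ m) = 1 := by
  rw [mk_eq_prod_Icc_of_hasProd (F := fun m => 1 + ∑' j, q0Weight m (j + 1) • X ^ (m * (j + 1)))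
    (Nat.Partition.hasProd_genFun q0Weight) fun m hm => by
      simp only [one_add_tsum_q0Weight]
      split_ifs
      · exact map_one _
      · simp [neg_pow (Ideal.Quotient.mk (Ideal.span {(X : ℤ⟦X⟧) ^ (N + 1)}) X),
          mk_X_pow_eq_zero hm]]
  simp only [one_add_tsum_q0Weight, apply_ite (Ideal.Quotient.mk _), map_one, map_add, map_pow,
    map_neg]
  exact prod_one_add_neg_pow_mul_prod_one_add_pow_eq_one (mk_X_pow_eq_zero (Nat.lt_succ_self N))

theorem mk_genFun_podWeight_mul (N : ℕ) :
    Ideal.Quotient.mk (Ideal.span {(X : ℤ⟦X⟧) ^ (N + 1)}) (Nat.Partition.genFun podWeight) *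
      ∏ m ∈ Icc 1 N, (if m % 4 = 2 then 1 else 1 + Ideal.Quotient.mk _ X ^ m) = 1 := by
  have hinv : ∀ m, 0 < m → Ideal.Quotient.mk (Ideal.span {(X : ℤ⟦X⟧) ^ (N + 1)})
      (1 + ∑' j, podWeight m (j + 1) • X ^ (m * (j + 1))) *
        (if m % 4 = 2 then 1 else 1 + Ideal.Quotient.mk _ X ^ m) = 1 := fun m hm => by
    simpa [apply_ite (Ideal.Quotient.mk _)] using
      congrArg (Ideal.Quotient.mk (Ideal.span {(X : ℤ⟦X⟧) ^ (N + 1)}))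
        (one_add_tsum_podWeight_mul hm)
  rw [mk_eq_prod_Icc_of_hasProd (F := fun m => 1 + ∑' j, podWeight m (j + 1) • X ^ (m * (j + 1)))
    (Nat.Partition.hasProd_genFun podWeight) fun m hm => by
      simpa [mk_X_pow_eq_zero hm] using hinv m (by omega), ← prod_mul_distrib]
  exact prod_eq_one fun m hm => hinv m (mem_Icc.1 hm).1

theorem stmt_0 (n : ℕ) : (-1 : ℤ) ^ n * Q0 n = (podE n : ℤ) - podO n := by
  have hA := mk_genFun_q0Weight_mul n
  have hB := mk_genFun_podWeight_mul n
  rw [← coeff_genFun_q0Weight, ← coeff_genFun_podWeight]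
  refine mk_span_X_pow_eq_iff.1 ?_ n (Nat.lt_succ_self n)
  exact (IsUnit.of_mul_eq_one_right _ hB).mul_right_cancel (hA.trans hB.symm)
end

section
/- For every nonnegative integer n, (-1)^n * Q_2(n) = b_{4,e}(n) - b_{4,o}(n), where Q_2(n) counts partitions of n into distinct parts not congruent to 2 mod 4, and b_{4,e}(n) (resp. b_{4,o}(n)) counts 4-regular partitions of n with an even (resp. odd) number of parts. -/
/-!
Both sides are coefficients of `Nat.Partition.genFun`, for the characters `fourRegularSignChar`
and `q2SignChar` below. Factor by factor, the first generating function is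
`∏_{4 ∤ k} (1 + X^k)⁻¹` and the second is `∏_{k odd} (1 - X^k) * ∏_{4 ∣ k} (1 + X^k)`.
Multiplying the second by `∏_{4 ∤ k} (1 + X^k)` gives
`∏_{k odd} (1 - X^(2k)) * ∏_{k even} (1 + X^k)`, which is `1` by Euler's identity
`∏ (1 + q^m) * ∏_{m odd} (1 - q^m) = 1` at `q = X^2`.
Both generating functions are therefore inverse to the same power series.
-/

/-- `Q2 n`: number of partitions of `n` into distinct parts none ≡ 2 (mod 4). -/
noncomputable def Q2 (n : ℕ) : ℕ :=
  Nat.card {p : n.Partition // p.parts.Nodup ∧ ∀ x ∈ p.parts, x % 4 ≠ 2}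

/-- `b4E n`: 4-regular partitions of `n` with an even number of parts. -/
noncomputable def b4E (n : ℕ) : ℕ :=
  Nat.card {p : n.Partition // Even (Multiset.card p.parts) ∧ ∀ x ∈ p.parts, ¬ (4 ∣ x)}

/-- `b4O n`: 4-regular partitions of `n` with an odd number of parts. -/
noncomputable def b4O (n : ℕ) : ℕ :=
  Nat.card {p : n.Partition // Odd (Multiset.card p.parts) ∧ ∀ x ∈ p.parts, ¬ (4 ∣ x)}

open PowerSeries Finset
open scoped PowerSeries.WithPiTopology

theorem PowerSeries.lt_order_pow_of_lt {R : Type*} [CommSemiring R] {f : R⟦X⟧}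
    (hf : constantCoeff f = 0) {m e : ℕ} (he : m < e) : (m : ℕ∞) < (f ^ e).order :=
  (Nat.cast_lt.mpr he).trans_le (le_order_pow_of_constantCoeff_eq_zero _ hf)

namespace PowerSeries.WithPiTopology

variable {R : Type*}

theorem multipliable_one_add_of_lt_order [CommSemiring R] [TopologicalSpace R]
    {f : ℕ → R⟦X⟧} (h : ∀ i : ℕ, (i : ℕ∞) < (f i).order) :
    Multipliable (1 + f ·) := by
  refine multipliable_one_add_of_tendsto_order_atTop_nhds_top _ ?_
  refine ENat.tendsto_nhds_top_iff_natCast_lt.mpr fun n ↦ Filter.eventually_atTop.mpr ⟨n, ?_⟩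
  exact fun m hm ↦ (Nat.cast_le.mpr hm).trans_lt (h m)

theorem multipliable_one_add_pow [CommSemiring R] [TopologicalSpace R] {f : R⟦X⟧}
    (hf : constantCoeff f = 0) {e : ℕ → ℕ} (he : ∀ m, m < e m) :
    Multipliable fun m ↦ 1 + f ^ e m :=
  multipliable_one_add_of_lt_order fun m ↦ lt_order_pow_of_lt hf (he m)

theorem multipliable_one_sub_pow [CommRing R] [TopologicalSpace R] {f : R⟦X⟧}
    (hf : constantCoeff f = 0) {e : ℕ → ℕ} (he : ∀ m, m < e m) :
    Multipliable fun m ↦ 1 - f ^ e m := by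
  simp_rw [sub_eq_add_neg]
  exact multipliable_one_add_of_lt_order fun m ↦
    (order_neg (f ^ e m)).symm ▸ lt_order_pow_of_lt hf (he m)

/-- Multiplying by `P = ∏ (1 - f^(m+1))` turns the left side into
`∏_{m odd} (1 - f^m) * ∏ (1 - f^(2(m+1)))`, which is `P` split into odd and even exponents. -/
theorem tprod_one_add_pow_mul_tprod_one_sub_pow_odd [CommRing R] [NoZeroDivisors R]
    [TopologicalSpace R] [IsTopologicalRing R] [T2Space R] {f : R⟦X⟧}
    (hf : constantCoeff f = 0) :
    (∏' m, (1 + f ^ (m + 1))) * ∏' m, (1 - f ^ (2 * m + 1)) = 1 := by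
  nontriviality R
  have hP : ∏' m, (1 - f ^ (m + 1)) ≠ 0 := by
    intro h
    have h0 := congrArg (coeff 0) h
    rw [coeff_zero_eq_constantCoeff,
      (multipliable_one_sub_pow hf (e := (· + 1)) (by simp)).map_tprod _
        (continuous_constantCoeff R)] at h0
    simp [hf] at h0
  have hsplit : (∏' m, (1 - f ^ (2 * m + 1))) * ∏' m, (1 - f ^ (2 * (m + 1))) =
      ∏' m, (1 - f ^ (m + 1)) := by
    have h := tprod_even_mul_odd (f := fun m ↦ 1 - f ^ (m + 1))
      (multipliable_one_sub_pow hf (e := fun m ↦ 2 * m + 1) (by omega))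
      (multipliable_one_sub_pow hf (e := fun m ↦ 2 * m + 1 + 1) (by omega))
    simp only [mul_add, mul_one] at h ⊢
    exact h
  refine mul_right_cancel₀ hP ?_
  calc (∏' m, (1 + f ^ (m + 1))) * (∏' m, (1 - f ^ (2 * m + 1))) * ∏' m, (1 - f ^ (m + 1))
      = (∏' m, (1 - f ^ (2 * m + 1))) *
          ((∏' m, (1 + f ^ (m + 1))) * ∏' m, (1 - f ^ (m + 1))) := by ring
    _ = (∏' m, (1 - f ^ (2 * m + 1))) * ∏' m, ((1 + f ^ (m + 1)) * (1 - f ^ (m + 1))) := by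
        rw [(multipliable_one_add_pow hf (by simp)).tprod_mul
          (multipliable_one_sub_pow hf (by simp))]
    _ = (∏' m, (1 - f ^ (2 * m + 1))) * ∏' m, (1 - f ^ (2 * (m + 1))) := by
        congr 1
        exact tprod_congr fun m ↦ by ring
    _ = 1 * ∏' m, (1 - f ^ (m + 1)) := by rw [hsplit, one_mul]

end PowerSeries.WithPiTopology

open PowerSeries.WithPiTopology Nat.Partition

theorem Multiset.toFinsupp_prod {α M : Type*} [DecidableEq α] [CommMonoid M] (s : Multiset α)
    (f : α → ℕ → M) : s.toFinsupp.prod f = ∏ a ∈ s.toFinset, f a (s.count a) := rfl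

def fourRegularSignChar (i c : ℕ) : ℤ := if ¬ 4 ∣ i then (-1) ^ c else 0

def q2SignChar (i c : ℕ) : ℤ := if c = 1 ∧ i % 4 ≠ 2 then (-1) ^ i else 0

theorem toFinsupp_prod_fourRegularSignChar (s : Multiset ℕ) :
    s.toFinsupp.prod fourRegularSignChar =
      if ∀ x ∈ s, ¬ 4 ∣ x then (-1) ^ Multiset.card s else 0 := by
  simp only [Multiset.toFinsupp_prod, fourRegularSignChar, prod_ite_zero, Multiset.mem_toFinset,
    prod_pow_eq_pow_sum, Multiset.toFinset_sum_count_eq]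

theorem toFinsupp_prod_q2SignChar (s : Multiset ℕ) :
    s.toFinsupp.prod q2SignChar =
      if s.Nodup ∧ ∀ x ∈ s, x % 4 ≠ 2 then (-1) ^ s.sum else 0 := by
  simp only [Multiset.toFinsupp_prod, q2SignChar, prod_ite_zero, Multiset.mem_toFinset,
    forall_and, ← Multiset.nodup_iff_count_eq_one]
  split_ifs with h
  · rw [prod_pow_eq_pow_sum, ← Multiset.toFinset_eq h.1]
    simp
  · rfl

theorem coeff_genFun_fourRegularSignChar (n : ℕ) :
    coeff n (genFun fourRegularSignChar) = (b4E n : ℤ) - b4O n := by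
  rw [b4E, b4O, Nat.card_eq_fintype_card, Nat.card_eq_fintype_card, Fintype.card_subtype,
    Fintype.card_subtype, natCast_card_filter, natCast_card_filter, ← sum_sub_distrib,
    coeff_genFun]
  refine sum_congr rfl fun p _ ↦ ?_
  rw [toFinsupp_prod_fourRegularSignChar]
  by_cases hreg : ∀ x ∈ p.parts, ¬ 4 ∣ x
  · simp only [if_pos hreg, and_iff_left hreg]
    rcases Nat.even_or_odd (Multiset.card p.parts) with h | h
    · simp [h, h.neg_one_pow, Nat.not_odd_iff_even.mpr h]
    · simp [h, h.neg_one_pow, Nat.not_even_iff_odd.mpr h]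
  · simp [hreg]

theorem coeff_genFun_q2SignChar (n : ℕ) :
    coeff n (genFun q2SignChar) = (-1) ^ n * (Q2 n : ℤ) := by
  rw [Q2, Nat.card_eq_fintype_card, Fintype.card_subtype, natCast_card_filter, mul_sum,
    coeff_genFun]
  refine sum_congr rfl fun p _ ↦ ?_
  rw [toFinsupp_prod_q2SignChar, p.parts_sum]
  simp

noncomputable def fourRegularDistinctFactor (k : ℕ) : ℤ⟦X⟧ :=
  if ¬ 4 ∣ k then 1 + X ^ k else 1

theorem multipliable_fourRegularDistinctFactor :
    Multipliable fun i ↦ fourRegularDistinctFactor (i + 1) := by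
  refine (multipliable_one_add_of_lt_order
    (f := fun i ↦ if ¬ 4 ∣ i + 1 then X ^ (i + 1) else 0) fun i ↦ ?_).congr fun i ↦ ?_
  · split_ifs
    · simp
    · rw [order_X_pow]
      exact_mod_cast Nat.lt_succ_self i
  · split_ifs <;> simp [fourRegularDistinctFactor, *]

theorem genFun_factor_fourRegularSignChar_mul {k : ℕ} (hk : k ≠ 0) :
    (1 + ∑' j, fourRegularSignChar k (j + 1) • (X : ℤ⟦X⟧) ^ (k * (j + 1))) *
      fourRegularDistinctFactor k = 1 := by
  by_cases h4 : 4 ∣ k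
  · simp [fourRegularSignChar, fourRegularDistinctFactor, h4]
  have hg : constantCoeff (-(X : ℤ⟦X⟧) ^ k) = 0 := by simp [hk]
  have hs : Summable fun j ↦ (-(X : ℤ⟦X⟧) ^ k) ^ (j + 1) :=
    (summable_nat_add_iff 1).mpr (summable_pow_of_constantCoeff_eq_zero hg)
  have hterm (j : ℕ) : fourRegularSignChar k (j + 1) • (X : ℤ⟦X⟧) ^ (k * (j + 1)) =
      (-(X : ℤ⟦X⟧) ^ k) ^ (j + 1) := by
    rw [fourRegularSignChar, if_pos h4, zsmul_eq_mul, neg_pow (X ^ k), ← pow_mul]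
    push_cast
    rfl
  calc (1 + ∑' j, fourRegularSignChar k (j + 1) • (X : ℤ⟦X⟧) ^ (k * (j + 1))) *
        fourRegularDistinctFactor k
      = (∑' j, (-(X : ℤ⟦X⟧) ^ k) ^ j) * (1 - -X ^ k) := by
        rw [tsum_eq_zero_add' hs, tsum_congr hterm, pow_zero, fourRegularDistinctFactor,
          if_pos h4, sub_neg_eq_add]
    _ = 1 := tsum_pow_mul_one_sub_of_constantCoeff_eq_zero hg

theorem genFun_factor_q2SignChar_mul (k : ℕ) :
    (1 + ∑' j, q2SignChar k (j + 1) • (X : ℤ⟦X⟧) ^ (k * (j + 1))) *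
      fourRegularDistinctFactor k = if Odd k then 1 - X ^ (2 * k) else 1 + X ^ k := by
  rw [tsum_eq_single 0 fun j hj ↦ by simp [q2SignChar, hj], q2SignChar, fourRegularDistinctFactor]
  rcases Nat.even_or_odd k with h | h
  · have hk_not_odd := Nat.not_odd_iff_even.mpr h
    by_cases h4 : 4 ∣ k
    · simp [h4, hk_not_odd, h.neg_one_pow, Nat.mod_eq_zero_of_dvd h4]
    · have h2 : k % 4 = 2 := by obtain ⟨m, rfl⟩ := h; omega
      simp [h4, hk_not_odd, h2]
  · have h2 : k % 4 ≠ 2 := by obtain ⟨m, rfl⟩ := h; omega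
    have h4 : ¬ 4 ∣ k := by obtain ⟨m, rfl⟩ := h; omega
    simp only [h, h2, h4, h.neg_one_pow, zero_add, mul_one, ne_eq, not_false_eq_true, and_self,
      if_true, zsmul_eq_mul]
    push_cast
    ring

theorem genFun_fourRegularSignChar_mul_tprod :
    genFun fourRegularSignChar * ∏' i, fourRegularDistinctFactor (i + 1) = 1 := by
  rw [genFun_eq_tprod, ← (multipliable_genFun _).tprod_mul multipliable_fourRegularDistinctFactor]
  exact (tprod_congr fun i : ℕ ↦ genFun_factor_fourRegularSignChar_mul i.succ_ne_zero).trans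
    tprod_one

theorem genFun_q2SignChar_mul_tprod :
    genFun q2SignChar * ∏' i, fourRegularDistinctFactor (i + 1) = 1 := by
  rw [genFun_eq_tprod, ← (multipliable_genFun _).tprod_mul multipliable_fourRegularDistinctFactor]
  refine (tprod_congr fun i : ℕ ↦ genFun_factor_q2SignChar_mul (i + 1)).trans ?_
  have hX2 : constantCoeff ((X : ℤ⟦X⟧) ^ 2) = 0 := by simp
  set g : ℕ → ℤ⟦X⟧ := fun i ↦
    if Odd (i + 1) then 1 - X ^ (2 * (i + 1)) else 1 + X ^ (i + 1)
  have hg_even (m : ℕ) : g (2 * m) = 1 - (X ^ 2) ^ (2 * m + 1) := by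
    simp [g, ← pow_mul]
  have hg_odd (m : ℕ) : g (2 * m + 1) = 1 + (X ^ 2) ^ (m + 1) := by
    simp [g, ← pow_mul, parity_simps, mul_add]
  rw [← tprod_even_mul_odd
    ((multipliable_one_sub_pow hX2 (e := fun m ↦ 2 * m + 1) (by omega)).congr
      fun m ↦ (hg_even m).symm)
    ((multipliable_one_add_pow hX2 (e := fun m ↦ m + 1) (by omega)).congr
      fun m ↦ (hg_odd m).symm)]
  simp_rw [hg_even, hg_odd]
  rw [mul_comm]
  exact tprod_one_add_pow_mul_tprod_one_sub_pow_odd hX2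

theorem genFun_fourRegularSignChar_eq_genFun_q2SignChar :
    genFun fourRegularSignChar = genFun q2SignChar :=
  left_inv_eq_right_inv genFun_fourRegularSignChar_mul_tprod
    (by rw [mul_comm, genFun_q2SignChar_mul_tprod])

theorem stmt_1 (n : ℕ) : (-1 : ℤ) ^ n * Q2 n = (b4E n : ℤ) - b4O n := by
  rw [← coeff_genFun_q2SignChar, ← coeff_genFun_fourRegularSignChar,
    genFun_fourRegularSignChar_eq_genFun_q2SignChar]
end

section
/- For every nonnegative integer n, Q_0(n) and pod(n) have the same parity, where Q_0(n) counts partitions of n into distinct parts not divisible by 4 and pod(n) counts partitions of n with distinct odd parts and unrestricted even parts. -/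
namespace PP

/-! ### The 2-free part of a natural number -/

def core (x : ℕ) : ℕ := ordCompl[2] x

lemma core_pos {x : ℕ} (hx : x ≠ 0) : 0 < core x := Nat.ordCompl_pos 2 hx

lemma core_two_mul (x : ℕ) : core (2 * x) = core x := by
  unfold core
  rw [Nat.ordCompl_mul]
  have : ordCompl[2] 2 = 1 := by
    simp [Nat.Prime.factorization_self Nat.prime_two]
  rw [this, one_mul]

lemma dvd_of_core_eq_of_le {x y : ℕ} (hx : x ≠ 0) (h : core x = core y) (hle : x ≤ y) :
    x ∣ y := by
  have ex := Nat.ordProj_mul_ordCompl_eq_self x 2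
  have ey := Nat.ordProj_mul_ordCompl_eq_self y 2
  set a := x.factorization 2
  set b := y.factorization 2
  have hj : 0 < core x := core_pos hx
  have hab : a ≤ b := by
    by_contra hab
    push_neg at hab
    have : 2 ^ b < 2 ^ a := Nat.pow_lt_pow_right one_lt_two hab
    have : y < x := by
      calc y = 2 ^ b * core y := ey.symm
        _ < 2 ^ a * core x := by rw [← h]; exact (Nat.mul_lt_mul_right hj).mpr this
        _ = x := ex
    omega
  calc x = 2 ^ a * core x := ex.symm
    _ ∣ 2 ^ b * core y := by rw [h]; exact mul_dvd_mul (pow_dvd_pow 2 hab) dvd_rfl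
    _ = y := ey

lemma two_mul_dvd_of_core_eq_of_lt {x y : ℕ} (hx : x ≠ 0) (h : core x = core y) (hlt : x < y) :
    2 * x ∣ y := by
  have ex := Nat.ordProj_mul_ordCompl_eq_self x 2
  have ey := Nat.ordProj_mul_ordCompl_eq_self y 2
  set a := x.factorization 2
  set b := y.factorization 2
  have hj : 0 < core x := core_pos hx
  have hab : a < b := by
    by_contra hab
    push_neg at hab
    have : 2 ^ b ≤ 2 ^ a := Nat.pow_le_pow_right (by norm_num) hab
    have : y ≤ x := by
      calc y = 2 ^ b * core y := ey.symm
        _ ≤ 2 ^ a * core x := by rw [← h]; exact Nat.mul_le_mul_right _ this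
        _ = x := ex
    omega
  have ex' : 2 ^ a * core x = x := ex
  calc 2 * x = 2 * (2 ^ a * core x) := by rw [ex']
    _ = 2 ^ (a + 1) * core x := by ring
    _ ∣ 2 ^ b * core y := by rw [h]; exact mul_dvd_mul (pow_dvd_pow 2 hab) dvd_rfl
    _ = y := ey

/-! ### Bad odd cores, the maximal part with minimal bad core, and the toggle `step` -/

def Bad (M : Multiset ℕ) (j : ℕ) : Prop :=
  ∃ x ∈ M, Even x ∧ core x = j ∧ (4 ∣ x ∨ 2 ≤ M.count x)

instance (M : Multiset ℕ) : DecidablePred (Bad M) := fun _ => Multiset.decidableExistsMultiset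

def Efil (M : Multiset ℕ) (j : ℕ) : Multiset ℕ := M.filter (fun x => Even x ∧ core x = j)

lemma mem_Efil {M : Multiset ℕ} {j x : ℕ} :
    x ∈ Efil M j ↔ x ∈ M ∧ Even x ∧ core x = j := by
  simp [Efil]

def j0 (M : Multiset ℕ) (hM : ∃ j, Bad M j) : ℕ := Nat.find hM

lemma Efil_nonempty (M : Multiset ℕ) (hM : ∃ j, Bad M j) :
    (Efil M (j0 M hM)).toFinset.Nonempty := by
  obtain ⟨x, hxM, hxe, hxc, -⟩ := Nat.find_spec hM
  exact ⟨x, by rw [Multiset.mem_toFinset, mem_Efil]; exact ⟨hxM, hxe, hxc⟩⟩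

def Lmax (M : Multiset ℕ) (hM : ∃ j, Bad M j) : ℕ :=
  (Efil M (j0 M hM)).toFinset.max' (Efil_nonempty M hM)

lemma Lmax_spec (M : Multiset ℕ) (hM : ∃ j, Bad M j) :
    Lmax M hM ∈ M ∧ Even (Lmax M hM) ∧ core (Lmax M hM) = j0 M hM := by
  have := (Efil M (j0 M hM)).toFinset.max'_mem (Efil_nonempty M hM)
  rw [Multiset.mem_toFinset, mem_Efil] at this
  exact this

lemma Lmax_ub {M : Multiset ℕ} (hM : ∃ j, Bad M j) {y : ℕ} (hy : y ∈ M) (hye : Even y)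
    (hyc : core y = j0 M hM) : y ≤ Lmax M hM :=
  (Efil M (j0 M hM)).toFinset.le_max' y
    (by rw [Multiset.mem_toFinset, mem_Efil]; exact ⟨hy, hye, hyc⟩)

def step (M : Multiset ℕ) (hM : ∃ j, Bad M j) : Multiset ℕ :=
  if 2 ≤ M.count (Lmax M hM) then
    2 * Lmax M hM ::ₘ (M.erase (Lmax M hM)).erase (Lmax M hM)
  else
    Lmax M hM / 2 ::ₘ Lmax M hM / 2 ::ₘ M.erase (Lmax M hM)

lemma step_congr {M₁ M₂ : Multiset ℕ} (h₁ : ∃ j, Bad M₁ j) (h₂ : ∃ j, Bad M₂ j)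
    (h : M₁ = M₂) : step M₁ h₁ = step M₂ h₂ := by subst h; rfl

section
variable {M : Multiset ℕ} (hM : ∃ j, Bad M j)

lemma badM : Bad M (j0 M hM) := Nat.find_spec hM

lemma four_dvd_Lmax (Hpos : ∀ x ∈ M, 0 < x) (hc : ¬ 2 ≤ M.count (Lmax M hM)) :
    4 ∣ Lmax M hM := by
  obtain ⟨x, hxM, hxe, hxc, hx4⟩ := badM hM
  have hxL : x ≤ Lmax M hM := Lmax_ub hM hxM hxe hxc
  have hx0 : x ≠ 0 := (Hpos x hxM).ne'
  have hcore : core x = core (Lmax M hM) := by rw [hxc, (Lmax_spec M hM).2.2]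
  rcases hx4 with h4 | hcnt
  · exact h4.trans (dvd_of_core_eq_of_le hx0 hcore hxL)
  · have hxne : x ≠ Lmax M hM := fun h => hc (h ▸ hcnt)
    have h2x := two_mul_dvd_of_core_eq_of_lt hx0 hcore (lt_of_le_of_ne hxL hxne)
    obtain ⟨k, hk⟩ := hxe
    exact dvd_trans ⟨k, by omega⟩ h2x

lemma exists_bad (Hpos : ∀ x ∈ M, 0 < x) (Hpod : ∀ x, Odd x → M.count x ≤ 1)
    (hng : ¬(M.Nodup ∧ ∀ x ∈ M, ¬ 4 ∣ x)) : ∃ j, Bad M j := by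
  by_cases h4 : ∃ x ∈ M, 4 ∣ x
  · obtain ⟨x, hxM, hx4⟩ := h4
    obtain ⟨k, hk⟩ := hx4
    exact ⟨core x, x, hxM, ⟨2 * k, by omega⟩, rfl, Or.inl ⟨k, hk⟩⟩
  · have hnd : ¬ M.Nodup := fun hnd => hng ⟨hnd, fun x hx h => h4 ⟨x, hx, h⟩⟩
    rw [Multiset.nodup_iff_count_le_one] at hnd
    push_neg at hnd
    obtain ⟨x, hx2⟩ := hnd
    have hxM : x ∈ M := by rw [← Multiset.count_pos]; omega
    have hxe : Even x := by
      rcases Nat.even_or_odd x with he | ho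
      · exact he
      · exact absurd (Hpod x ho) (by omega)
    exact ⟨core x, x, hxM, hxe, rfl, Or.inr (by omega)⟩

theorem step_invol (Hpos : ∀ x ∈ M, 0 < x) (h' : ∃ j, Bad (step M hM) j) :
    step (step M hM) h' = M := by
  obtain ⟨hLM, hLe, hLc⟩ := Lmax_spec M hM
  set j := j0 M hM with hj
  set L := Lmax M hM with hL
  clear_value j L
  have hL0 : 0 < L := Hpos L hLM
  by_cases hc : 2 ≤ M.count L
  · -- merge case
    have hstep : step M hM = 2 * L ::ₘ (M.erase L).erase L := by
      rw [step, ← hL, if_pos hc]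
    have hLmem' : L ∈ M.erase L := by
      rw [← Multiset.count_pos, Multiset.count_erase_self]; omega
    have e1 : L ::ₘ (M.erase L).erase L = M.erase L := Multiset.cons_erase hLmem'
    have e2 : L ::ₘ M.erase L = M := Multiset.cons_erase hLM
    set rest := (M.erase L).erase L with hrest
    clear_value rest
    have hM1 : M = L ::ₘ L ::ₘ rest := by rw [e1, e2]
    set N := 2 * L ::ₘ rest with hN
    clear_value N
    have hrestM : rest ≤ M := by
      rw [hrest]
      exact le_trans (Multiset.erase_le L (M.erase L)) (Multiset.erase_le L M)
    have h2Lnot : 2 * L ∉ M := by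
      intro hmem
      have h1 : 2 * L ≤ Lmax M hM :=
        Lmax_ub hM hmem (even_two_mul L) (by rw [core_two_mul, hLc, hj])
      rw [← hL] at h1
      omega
    have h2Le : Even (2 * L) := even_two_mul L
    have h2Lc : core (2 * L) = j := by rw [core_two_mul, hLc]
    have h2L4 : 4 ∣ 2 * L := by obtain ⟨k, hk⟩ := hLe; exact ⟨k, by omega⟩
    have badN : Bad N j := ⟨2 * L, by rw [hN]; exact Multiset.mem_cons_self _ _, h2Le, h2Lc,
      Or.inl h2L4⟩
    have hN' : ∃ i, Bad N i := ⟨j, badN⟩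
    have minN : ∀ i < j, ¬ Bad N i := by
      intro i hij hbad
      obtain ⟨x, hxN, hxe, hxc, hx4⟩ := hbad
      have hxne : x ≠ 2 * L := by
        rintro rfl
        exact (Nat.ne_of_lt hij).symm (hxc.symm.trans h2Lc).symm
      have hxrest : x ∈ rest := by
        rcases Multiset.mem_cons.mp (hN ▸ hxN) with h | h
        · exact absurd h hxne
        · exact h
      have hxM : x ∈ M := Multiset.mem_of_le hrestM hxrest
      refine Nat.find_min hM (show i < Nat.find hM by rw [hj] at hij; exact hij) ⟨x, hxM, hxe, hxc, ?_⟩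
      rcases hx4 with h4 | hcnt
      · exact Or.inl h4
      · refine Or.inr ?_
        have hcx : N.count x = rest.count x := by
          rw [hN, Multiset.count_cons_of_ne hxne]
        have hle := Multiset.count_le_of_le x hrestM
        omega
    have hjN : j0 N hN' = j := by
      show Nat.find hN' = j
      rw [Nat.find_eq_iff]
      exact ⟨badN, minN⟩
    have hLN : Lmax N hN' = 2 * L := by
      have hub : ∀ y ∈ N, Even y → core y = j → y ≤ 2 * L := by
        intro y hy hye hyc
        rcases Multiset.mem_cons.mp (hN ▸ hy) with h | h
        · omega
        · have h1 : y ≤ Lmax M hM :=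
            Lmax_ub hM (Multiset.mem_of_le hrestM h) hye (by rw [hyc, hj])
          rw [← hL] at h1
          omega
      apply le_antisymm
      · obtain ⟨h1, h2, h3⟩ := Lmax_spec N hN'
        exact hub _ h1 h2 (by rw [h3, hjN])
      · have := Lmax_ub hN' (show 2 * L ∈ N by rw [hN]; exact Multiset.mem_cons_self _ _)
          h2Le (by rw [h2Lc, hjN])
        exact this
    have hcnt2L : N.count (2 * L) = 1 := by
      have h0 : M.count (2 * L) = 0 := Multiset.count_eq_zero_of_notMem h2Lnot
      have hle := Multiset.count_le_of_le (2 * L) hrestM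
      rw [hN, Multiset.count_cons_self]
      omega
    calc step (step M hM) h' = step N hN' := step_congr h' hN' hstep
      _ = M := by
          rw [step, hLN, hcnt2L]
          rw [if_neg (by omega : ¬ (2:ℕ) ≤ 1)]
          rw [hN, Multiset.erase_cons_head]
          rw [Nat.mul_div_cancel_left L (by norm_num : 0 < 2)]
          exact hM1.symm
  · -- split case
    have h4 : 4 ∣ L := by rw [hL]; exact four_dvd_Lmax hM Hpos (by rw [← hL]; exact hc)
    obtain ⟨k, hk⟩ := h4
    have hcnt1 : M.count L = 1 := by
      have := Multiset.count_pos.mpr hLM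
      omega
    have hstep : step M hM = L / 2 ::ₘ L / 2 ::ₘ M.erase L := by
      rw [step, ← hL, if_neg hc]
    set g := L / 2 with hg
    have hL2 : L = 2 * g := by omega
    have hge : Even g := ⟨k, by omega⟩
    have hgc : core g = j := by rw [← hLc, hL2, core_two_mul]
    have hg0 : 0 < g := by omega
    clear_value g
    set rest := M.erase L with hrest
    clear_value rest
    have hrestM : rest ≤ M := by rw [hrest]; exact Multiset.erase_le L M
    have hM1 : M = L ::ₘ rest := by rw [hrest, Multiset.cons_erase hLM]
    have hLnotrest : L ∉ rest := by
      rw [← Multiset.count_pos, hrest, Multiset.count_erase_self]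
      omega
    set N := g ::ₘ g ::ₘ rest with hN
    clear_value N
    have hcntg : 2 ≤ N.count g := by
      rw [hN, Multiset.count_cons_self, Multiset.count_cons_self]
      omega
    have badN : Bad N j := ⟨g, by rw [hN]; exact Multiset.mem_cons_self _ _, hge, hgc,
      Or.inr hcntg⟩
    have hN' : ∃ i, Bad N i := ⟨j, badN⟩
    have minN : ∀ i < j, ¬ Bad N i := by
      intro i hij hbad
      obtain ⟨x, hxN, hxe, hxc, hx4⟩ := hbad
      have hxne : x ≠ g := by
        rintro rfl
        exact (Nat.ne_of_lt hij).symm (hxc.symm.trans hgc).symm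
      have hxrest : x ∈ rest := by
        rcases Multiset.mem_cons.mp (hN ▸ hxN) with h | h
        · exact absurd h hxne
        rcases Multiset.mem_cons.mp h with h' | h'
        · exact absurd h' hxne
        · exact h'
      have hxM : x ∈ M := Multiset.mem_of_le hrestM hxrest
      refine Nat.find_min hM (show i < Nat.find hM by rw [hj] at hij; exact hij) ⟨x, hxM, hxe, hxc, ?_⟩
      rcases hx4 with hd | hcnt
      · exact Or.inl hd
      · refine Or.inr ?_
        have hcx : N.count x = rest.count x := by
          rw [hN, Multiset.count_cons_of_ne hxne, Multiset.count_cons_of_ne hxne]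
        have hle := Multiset.count_le_of_le x hrestM
        omega
    have hjN : j0 N hN' = j := by
      show Nat.find hN' = j
      rw [Nat.find_eq_iff]
      exact ⟨badN, minN⟩
    have hLN : Lmax N hN' = g := by
      have hub : ∀ y ∈ N, Even y → core y = j → y ≤ g := by
        intro y hy hye hyc
        rcases Multiset.mem_cons.mp (hN ▸ hy) with h | h
        · omega
        rcases Multiset.mem_cons.mp h with h' | h'
        · omega
        · have hyM : y ∈ M := Multiset.mem_of_le hrestM h'
          have hyL : y ≤ Lmax M hM := Lmax_ub hM hyM hye (by rw [hyc, hj])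
          rw [← hL] at hyL
          have hyneL : y ≠ L := fun hEq => hLnotrest (hEq ▸ h')
          have h2y := two_mul_dvd_of_core_eq_of_lt (Hpos y hyM).ne'
            (by rw [hyc, ← hLc]) (lt_of_le_of_ne hyL hyneL)
          have := Nat.le_of_dvd hL0 h2y
          omega
      apply le_antisymm
      · obtain ⟨h1, h2, h3⟩ := Lmax_spec N hN'
        exact hub _ h1 h2 (by rw [h3, hjN])
      · exact Lmax_ub hN' (show g ∈ N by rw [hN]; exact Multiset.mem_cons_self _ _)
          hge (by rw [hgc, hjN])
    calc step (step M hM) h' = step N hN' := step_congr h' hN' hstep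
      _ = M := by
          rw [step, hLN, if_pos hcntg]
          rw [hN, Multiset.erase_cons_head, Multiset.erase_cons_head]
          rw [← hL2]
          exact hM1.symm

lemma step_cases (Hpos : ∀ x ∈ M, 0 < x) :
    (∃ L rest, Even L ∧ 0 < L ∧ M = L ::ₘ L ::ₘ rest ∧ step M hM = 2 * L ::ₘ rest) ∨
    (∃ g rest, Even g ∧ 0 < g ∧ M = 2 * g ::ₘ rest ∧ step M hM = g ::ₘ g ::ₘ rest) := by
  obtain ⟨hLM, hLe, hLc⟩ := Lmax_spec M hM
  set L := Lmax M hM with hL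
  have hL0 : 0 < L := Hpos L hLM
  by_cases hc : 2 ≤ M.count L
  · left
    refine ⟨L, (M.erase L).erase L, hLe, hL0, ?_, ?_⟩
    · have hLmem' : L ∈ M.erase L := by
        rw [← Multiset.count_pos, Multiset.count_erase_self]; omega
      rw [Multiset.cons_erase hLmem', Multiset.cons_erase hLM]
    · rw [step, ← hL, if_pos hc]
  · right
    have h4 : 4 ∣ L := four_dvd_Lmax hM Hpos hc
    obtain ⟨k, hk⟩ := h4
    refine ⟨L / 2, M.erase L, ⟨k, by omega⟩, by omega, ?_, ?_⟩
    · rw [show 2 * (L / 2) = L by omega, Multiset.cons_erase hLM]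
    · rw [step, ← hL, if_neg hc]

lemma step_sum (Hpos : ∀ x ∈ M, 0 < x) : (step M hM).sum = M.sum := by
  rcases step_cases hM Hpos with ⟨L, rest, _, _, hM1, hstep⟩ | ⟨g, rest, _, _, hM1, hstep⟩ <;>
    rw [hstep, hM1] <;> simp [Multiset.sum_cons] <;> ring

lemma step_pos (Hpos : ∀ x ∈ M, 0 < x) : ∀ x ∈ step M hM, 0 < x := by
  rcases step_cases hM Hpos with ⟨L, rest, _, hL0, hM1, hstep⟩ | ⟨g, rest, _, hg0, hM1, hstep⟩ <;>
      rw [hstep] <;> intro x hx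
  · rcases Multiset.mem_cons.mp hx with h | h
    · omega
    · exact Hpos x (by rw [hM1]; exact Multiset.mem_cons_of_mem (Multiset.mem_cons_of_mem h))
  · rcases Multiset.mem_cons.mp hx with h | h
    · omega
    rcases Multiset.mem_cons.mp h with h' | h'
    · omega
    · exact Hpos x (by rw [hM1]; exact Multiset.mem_cons_of_mem h')

lemma step_count_odd (Hpos : ∀ x ∈ M, 0 < x) {x : ℕ} (hx : Odd x) :
    (step M hM).count x = M.count x := by
  rcases step_cases hM Hpos with ⟨L, rest, hLe, _, hM1, hstep⟩ | ⟨g, rest, hge, _, hM1, hstep⟩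
  · have h1 : x ≠ 2 * L := by rintro rfl; exact (Nat.not_odd_iff_even.mpr (even_two_mul L)) hx
    have h2 : x ≠ L := by rintro rfl; exact (Nat.not_odd_iff_even.mpr hLe) hx
    rw [hstep, hM1, Multiset.count_cons_of_ne h1, Multiset.count_cons_of_ne h2,
      Multiset.count_cons_of_ne h2]
  · have h1 : x ≠ g := by rintro rfl; exact (Nat.not_odd_iff_even.mpr hge) hx
    have h2 : x ≠ 2 * g := by rintro rfl; exact (Nat.not_odd_iff_even.mpr (even_two_mul g)) hx
    rw [hstep, hM1, Multiset.count_cons_of_ne h1, Multiset.count_cons_of_ne h1,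
      Multiset.count_cons_of_ne h2]

lemma step_card_ne (Hpos : ∀ x ∈ M, 0 < x) : Multiset.card (step M hM) ≠ Multiset.card M := by
  rcases step_cases hM Hpos with ⟨L, rest, _, _, hM1, hstep⟩ | ⟨g, rest, _, _, hM1, hstep⟩ <;>
    rw [hstep, hM1] <;> simp [Multiset.card_cons] <;> omega

lemma not_good_step (Hpos : ∀ x ∈ M, 0 < x) :
    ¬((step M hM).Nodup ∧ ∀ x ∈ step M hM, ¬ 4 ∣ x) := by
  rcases step_cases hM Hpos with ⟨L, rest, hLe, _, hM1, hstep⟩ | ⟨g, rest, _, hg0, hM1, hstep⟩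
  · rintro ⟨-, hd⟩
    obtain ⟨k, hk⟩ := hLe
    exact hd (2 * L) (by rw [hstep]; exact Multiset.mem_cons_self _ _) ⟨k, by omega⟩
  · rintro ⟨hnd, -⟩
    rw [Multiset.nodup_iff_count_le_one] at hnd
    have := hnd g
    rw [hstep, Multiset.count_cons_self, Multiset.count_cons_self] at this
    omega

end

/-! ### The involution on pod-partitions -/

def Good {n : ℕ} (p : n.Partition) : Prop := p.parts.Nodup ∧ ∀ x ∈ p.parts, ¬ (4 ∣ x)

instance {n : ℕ} (p : n.Partition) : Decidable (Good p) :=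
  inferInstanceAs (Decidable (_ ∧ _))

abbrev PodSet (n : ℕ) : Type := {p : n.Partition // ∀ x, Odd x → p.parts.count x ≤ 1}

def sigma (n : ℕ) (p : PodSet n) : PodSet n :=
  if h : Good p.1 then p
  else
    have hM : ∃ j, Bad p.1.parts j :=
      exists_bad (fun x hx => p.1.parts_pos hx) p.2 h
    ⟨⟨step p.1.parts hM,
      fun {x} hx => step_pos hM (fun y hy => p.1.parts_pos hy) x hx,
      by rw [step_sum hM (fun y hy => p.1.parts_pos hy), p.1.parts_sum]⟩,
      fun x hx => by
        show (step p.1.parts hM).count x ≤ 1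
        rw [step_count_odd hM (fun y hy => p.1.parts_pos hy) hx]
        exact p.2 x hx⟩

lemma sigma_not_good {n : ℕ} (p : PodSet n) (h : ¬ Good p.1) :
    ¬ Good (sigma n p).1 := by
  rw [sigma, dif_neg h]
  exact not_good_step _ (fun y hy => p.1.parts_pos hy)

lemma sigma_invol {n : ℕ} (p : PodSet n) : sigma n (sigma n p) = p := by
  by_cases h : Good p.1
  · have h1 : sigma n p = p := by rw [sigma, dif_pos h]
    rw [h1, h1]
  · have h2 := sigma_not_good p h
    have hM : ∃ j, Bad p.1.parts j := exists_bad (fun x hx => p.1.parts_pos hx) p.2 h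
    have hM2 : ∃ j, Bad (sigma n p).1.parts j :=
      exists_bad (fun x hx => (sigma n p).1.parts_pos hx) (sigma n p).2 h2
    have hq : (sigma n p).1.parts = step p.1.parts hM := by rw [sigma, dif_neg h]
    have key : step (sigma n p).1.parts hM2 = p.1.parts := by
      calc step (sigma n p).1.parts hM2
          = step (step p.1.parts hM) (hq ▸ hM2) := step_congr hM2 (hq ▸ hM2) hq
        _ = p.1.parts := step_invol hM (fun x hx => p.1.parts_pos hx) (hq ▸ hM2)
    rw [sigma, dif_neg h2]
    exact Subtype.ext (Nat.Partition.ext key)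

lemma sigma_fixed_iff {n : ℕ} (p : PodSet n) : sigma n p = p ↔ Good p.1 := by
  constructor
  · intro hfix
    by_contra h
    have hq : (sigma n p).1.parts = step p.1.parts
        (exists_bad (fun x hx => p.1.parts_pos hx) p.2 h) := by
      rw [sigma, dif_neg h]
    have := step_card_ne (exists_bad (fun x hx => p.1.parts_pos hx) p.2 h)
      (fun x hx => p.1.parts_pos hx)
    rw [← hq, hfix] at this
    exact this rfl
  · intro h
    rw [sigma, dif_pos h]

end PP

/-- `pod n`: partitions of `n` whose odd parts are distinct (even parts unrestricted). -/
noncomputable def pod (n : ℕ) : ℕ :=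
  Nat.card {p : n.Partition // ∀ x, Odd x → p.parts.count x ≤ 1}

theorem stmt_2 (n : ℕ) : Q0 n % 2 = pod n % 2 := by
  classical
  letI : Fintype (PP.PodSet n) := Fintype.ofFinite _
  set f : Function.End (PP.PodSet n) := PP.sigma n with hf
  have hf2 : f ^ 2 ^ 1 = 1 := by
    funext p
    show PP.sigma n (PP.sigma n p) = p
    exact PP.sigma_invol p
  have hmod := Equiv.Perm.card_fixedPoints_modEq (p := 2) (n := 1) hf2
  have hcard : Fintype.card (Function.fixedPoints f) =
      Fintype.card {p : n.Partition // p.parts.Nodup ∧ ∀ x ∈ p.parts, ¬ (4 ∣ x)} := by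
    apply Fintype.card_congr
    exact ⟨fun q => ⟨q.1.1, (PP.sigma_fixed_iff q.1).mp q.2⟩,
      fun p => ⟨⟨p.1, fun x _ => Multiset.nodup_iff_count_le_one.mp p.2.1 x⟩,
        (PP.sigma_fixed_iff _).mpr p.2⟩,
      fun q => Subtype.ext (Subtype.ext rfl), fun p => Subtype.ext rfl⟩
  have hQ : Q0 n = Fintype.card (Function.fixedPoints f) := by
    rw [Q0, Nat.card_eq_fintype_card, hcard]
  have hP : pod n = Fintype.card (PP.PodSet n) := by
    rw [pod, Nat.card_eq_fintype_card]
  rw [hQ, hP]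
  exact hmod.symm
end

section
/- For every nonnegative integer n, Q_2(n) and b_4(n) have the same parity, where Q_2(n) counts partitions of n into distinct parts not congruent to 2 mod 4 and b_4(n) counts 4-regular partitions of n. -/
/-- `b4 n`: number of 4-regular partitions of `n` (no part divisible by 4). -/
noncomputable def b4 (n : ℕ) : ℕ :=
  Nat.card {p : n.Partition // ∀ x ∈ p.parts, ¬ (4 ∣ x)}

open PowerSeries PowerSeries.WithPiTopology Finset Filter

namespace Nat.Partition

theorem hasProd_powerSeriesMk_card_nodup_restricted (R : Type*) [CommSemiring R]
    [TopologicalSpace R] [T2Space R] (p : ℕ → Prop) [DecidablePred p] :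
    HasProd (fun i ↦ if p (i + 1) then 1 + X ^ (i + 1) else 1)
      (PowerSeries.mk fun n ↦ (#{q : n.Partition | q.parts.Nodup ∧ ∀ i ∈ q.parts, p i} : R)) := by
  convert hasProd_genFun (fun i c ↦ if c = 1 ∧ p i then (1 : R) else 0) using 1
  · ext1 i
    rw [tsum_eq_single 0 fun j hj ↦ by simp [hj]]
    split_ifs <;> simp_all
  · simp_rw [genFun, card_filter, Finsupp.prod, prod_boole]
    congr! 4 with n q
    simp only [Multiset.toFinsupp_support, Multiset.mem_toFinset, Multiset.toFinsupp_apply,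
      Multiset.nodup_iff_count_eq_one, forall_and]
    push_cast
    rfl

end Nat.Partition

instance PowerSeries.charP (R : Type*) [CommRing R] (p : ℕ) [CharP R p] : CharP R⟦X⟧ p :=
  charP_of_injective_algebraMap C_injective p

section EulerFactor

variable {R : Type*} [CommRing R]

/-- The `i`-th factor of `∏_{k ≥ 1, p k} (1 - X ^ k)`, indexed from `0` as in
`Nat.Partition.hasProd_genFun`. -/
noncomputable def eulerFactor (p : ℕ → Prop) [DecidablePred p] (i : ℕ) : R⟦X⟧ :=
  if p (i + 1) then 1 - X ^ (i + 1) else 1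

theorem eulerFactor_mul_eulerFactor_not (p : ℕ → Prop) [DecidablePred p] (i : ℕ) :
    eulerFactor p i * eulerFactor (¬ p ·) i = (1 - X ^ (i + 1) : R⟦X⟧) := by
  unfold eulerFactor
  split_ifs <;> simp_all

variable [TopologicalSpace R]

theorem multipliable_eulerFactor (p : ℕ → Prop) [DecidablePred p] :
    Multipliable (eulerFactor (R := R) p) := by
  nontriviality R
  have : eulerFactor (R := R) p = fun i ↦ 1 + if p (i + 1) then -X ^ (i + 1) else 0 := by
    ext1 i
    unfold eulerFactor
    split_ifs <;> ring
  rw [this]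
  apply multipliable_one_add_of_tendsto_order_atTop_nhds_top
  refine ENat.tendsto_nhds_top_iff_natCast_lt.mpr fun n ↦ eventually_atTop.mpr ⟨n, fun m hm ↦ ?_⟩
  split_ifs
  · rw [order_neg, order_X_pow]
    exact_mod_cast Nat.lt_add_one_iff.mpr hm
  · simp

variable [IsTopologicalRing R] [T2Space R]

theorem tprod_eulerFactor_mul_tprod_eulerFactor_not (p : ℕ → Prop) [DecidablePred p] :
    (∏' i, eulerFactor p i) * ∏' i, eulerFactor (¬ p ·) i = ∏' i, (1 - X ^ (i + 1) : R⟦X⟧) := by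
  rw [← (multipliable_eulerFactor p).tprod_mul (multipliable_eulerFactor _)]
  simp_rw [eulerFactor_mul_eulerFactor_not]

theorem powerSeriesMk_card_restricted_mul_tprod_eulerFactor (p : ℕ → Prop) [DecidablePred p] :
    (PowerSeries.mk fun n ↦ (#(Nat.Partition.restricted n p) : R)) * ∏' i, eulerFactor p i = 1 := by
  rw [Nat.Partition.powerSeriesMk_card_restricted_eq_tprod R p,
    ← (Nat.Partition.multipliable_powerSeriesMk_card_restricted R p).tprod_mul
      (multipliable_eulerFactor p)]
  refine (tprod_congr fun i ↦ ?_).trans tprod_one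
  unfold eulerFactor
  split_ifs
  · simp_rw [pow_mul]
    exact tsum_pow_mul_one_sub_of_constantCoeff_eq_zero (by simp)
  · exact one_mul 1

variable [CharP R 2]

theorem tprod_eulerFactor_even :
    ∏' i, eulerFactor Even i = (∏' i, (1 - X ^ (i + 1) : R⟦X⟧)) ^ 2 := by
  have h_even : (fun k ↦ eulerFactor (R := R) Even (2 * k)) = fun _ ↦ 1 := by
    ext1 k
    simp [eulerFactor]
  have h_odd : (fun k ↦ eulerFactor (R := R) Even (2 * k + 1)) =
      fun k ↦ (1 - X ^ (k + 1)) ^ 2 := by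
    ext1 k
    simp only [eulerFactor, sub_pow_char, one_pow, ← pow_mul]
    rw [if_pos (by grind)]
    ring_nf
  have h_mult := multipliable_one_sub_X_pow R
  rw [← tprod_even_mul_odd (f := eulerFactor Even) (by rw [h_even]; exact multipliable_one)
    (by rw [h_odd]; exact h_mult.pow 2), h_even, h_odd]
  simp [h_mult.tprod_pow]

variable [IsDomain R]

theorem tprod_eulerFactor_not_even_mul_tprod_one_sub_X_pow :
    (∏' i, eulerFactor (¬ Even ·) i) * ∏' i, (1 - X ^ (i + 1) : R⟦X⟧) = 1 := by
  set P := ∏' i, (1 - X ^ (i + 1) : R⟦X⟧)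
  refine mul_left_cancel₀ (tprod_one_sub_X_pow_ne_zero R) ?_
  calc P * ((∏' i, eulerFactor (¬ Even ·) i) * P)
      = (∏' i, eulerFactor Even i) * (∏' i, eulerFactor (¬ Even ·) i) := by
        rw [tprod_eulerFactor_even]; ring
    _ = P * 1 := by rw [tprod_eulerFactor_mul_tprod_eulerFactor_not, mul_one]

theorem tprod_eulerFactor_mod_four_ne_two_mul_not_four_dvd :
    (∏' i, eulerFactor (· % 4 ≠ 2) i) * ∏' i, eulerFactor (¬ 4 ∣ ·) i = (1 : R⟦X⟧) := by
  have h_factor (i : ℕ) : eulerFactor (R := R) (· % 4 ≠ 2) i * eulerFactor (¬ 4 ∣ ·) i =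
      eulerFactor (¬ Even ·) i ^ 2 * eulerFactor Even i := by
    simp only [eulerFactor, Nat.even_iff]
    split_ifs <;> first | omega | ring
  have hO := multipliable_eulerFactor (R := R) (¬ Even ·)
  rw [← (multipliable_eulerFactor _).tprod_mul (multipliable_eulerFactor _)]
  simp_rw [h_factor]
  rw [(hO.pow 2).tprod_mul (multipliable_eulerFactor _), hO.tprod_pow, tprod_eulerFactor_even,
    ← mul_pow, tprod_eulerFactor_not_even_mul_tprod_one_sub_X_pow, one_pow]

end EulerFactor

theorem Q2_eq_card (n : ℕ) :
    Q2 n = #{q : n.Partition | q.parts.Nodup ∧ ∀ i ∈ q.parts, i % 4 ≠ 2} := by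
  rw [Q2, Nat.card_eq_fintype_card, Fintype.card_subtype]

theorem b4_eq_card_restricted (n : ℕ) : b4 n = #(Nat.Partition.restricted n (¬ 4 ∣ ·)) := by
  rw [b4, Nat.card_eq_fintype_card, Fintype.card_subtype]
  rfl

section

variable {R : Type*} [CommRing R] [TopologicalSpace R] [IsTopologicalRing R] [T2Space R]

theorem powerSeriesMk_b4_mul_tprod_eulerFactor :
    (PowerSeries.mk fun n ↦ (b4 n : R)) * ∏' i, eulerFactor (¬ 4 ∣ ·) i = 1 := by
  simp_rw [b4_eq_card_restricted]
  exact powerSeriesMk_card_restricted_mul_tprod_eulerFactor _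

theorem powerSeriesMk_Q2_mul_tprod_eulerFactor [CharP R 2] [IsDomain R] :
    (PowerSeries.mk fun n ↦ (Q2 n : R)) * ∏' i, eulerFactor (¬ 4 ∣ ·) i = 1 := by
  have h := Nat.Partition.hasProd_powerSeriesMk_card_nodup_restricted R (· % 4 ≠ 2)
  simp_rw [← CharTwo.sub_eq_add, ← Q2_eq_card] at h
  rw [← h.tprod_eq]
  exact tprod_eulerFactor_mod_four_ne_two_mul_not_four_dvd

end

theorem stmt_3 (n : ℕ) : Q2 n % 2 = b4 n % 2 := by
  have h : (PowerSeries.mk fun n ↦ (Q2 n : ZMod 2)) = PowerSeries.mk fun n ↦ (b4 n : ZMod 2) :=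
    left_inv_eq_right_inv powerSeriesMk_Q2_mul_tprod_eulerFactor
      ((mul_comm _ _).trans powerSeriesMk_b4_mul_tprod_eulerFactor)
  simpa [ZMod.natCast_eq_natCast_iff'] using congrArg (coeff n) h
end

section
/- As formal power series, (1 - q)(1 - q^3)(1 - q^5)\cdots \cdot (1+q^2)(1+q^6)(1+q^{10})\cdots = \sum_{n=0}^{\infty} (-1)^n Q_0(n) q^n; that is, (q;q^2)_\infty (-q^2;q^4)_\infty is the generating function of (-1)^n Q_0(n). -/
open PowerSeries

/-- Formal infinite product `∏_{k=0}^∞ f k` of power series, for families where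
`f k ≡ 1 (mod q^{k+1})` (as for all q-Pochhammer factors below): the coefficient of `q^n`
is then the (stable) coefficient of `q^n` in any partial product `∏_{k≤N} f k` with `N ≥ n`. -/
noncomputable def infProd (f : ℕ → PowerSeries ℤ) : PowerSeries ℤ :=
  PowerSeries.mk fun n => PowerSeries.coeff (R := ℤ) n (∏ k ∈ Finset.range (n + 1), f k)

/-!
Substituting `q ↦ -q` (`PowerSeries.rescale (-1)`) turns `(q;q²)_∞ (-q²;q⁴)_∞` into
`(-q;q²)_∞ (-q²;q⁴)_∞ = ∏_{4 ∤ m} (1 + q^m)`, which is the generating function of partitions into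
distinct parts not divisible by 4 by Mathlib's `Nat.Partition.hasProd_genFun`. To use it, `infProd`
is identified with the product in the coefficientwise topology: its factors are `≡ 1 mod q^(k+1)`,
so every coefficient of the finite partial products is eventually constant.
-/

open Finset
open scoped PowerSeries.WithPiTopology

namespace Nat.Partition

theorem hasProd_powerSeriesMk_card_restricted_inter_distincts (R : Type*) [CommSemiring R]
    [TopologicalSpace R] [T2Space R] (p : ℕ → Prop) [DecidablePred p] :
    HasProd (fun i ↦ if p (i + 1) then 1 + X ^ (i + 1) else 1)
      (PowerSeries.mk fun n ↦ (#(restricted n p ∩ distincts n) : R)) := by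
  convert hasProd_genFun (fun i c ↦ if p i ∧ c < 2 then (1 : R) else 0) using 1
  · ext1 i
    rw [tsum_eq_single 0 fun j hj ↦ by simp [show ¬ j + 1 < 2 by omega]]
    by_cases hi : p (i + 1) <;> simp [hi]
  · simp_rw [genFun, ← countRestricted_two, restricted, countRestricted, ← filter_and,
      card_filter, Finsupp.prod, prod_boole]
    simp [forall_and]

end Nat.Partition

theorem Q0_eq_card_restricted_inter_distincts (n : ℕ) :
    Q0 n = #(Nat.Partition.restricted n (¬ 4 ∣ ·) ∩ Nat.Partition.distincts n) := by
  rw [Q0, Nat.card_eq_fintype_card, Fintype.card_subtype, Nat.Partition.restricted,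
    Nat.Partition.distincts, ← filter_and]
  simp only [and_comm]

theorem dvd_prod_sub_one {α ι : Type*} [CommRing α] {a : α} {s : Finset ι} {f : ι → α}
    (hf : ∀ i ∈ s, a ∣ f i - 1) : a ∣ ∏ i ∈ s, f i - 1 :=
  prod_induction f (fun g ↦ a ∣ g - 1)
    (fun g h hg hh ↦ by simpa [mul_sub, sub_mul] using dvd_add (dvd_mul_of_dvd_right hh g) hg)
    (by simp) hf

theorem PowerSeries.coeff_mul_eq_of_X_pow_dvd_sub_one {R : Type*} [CommRing R] {d : ℕ}
    {f g : R⟦X⟧} (hg : X ^ (d + 1) ∣ g - 1) : coeff d (g * f) = coeff d f := by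
  have hvanish : coeff d ((g - 1) * f) = 0 :=
    X_pow_dvd_iff.mp (dvd_mul_of_dvd_left hg f) d (Nat.lt_succ_self d)
  rw [← sub_eq_zero, ← map_sub, ← sub_one_mul, hvanish]

theorem hasProd_infProd {f : ℕ → ℤ⟦X⟧} (hf : ∀ k, X ^ (k + 1) ∣ f k - 1) :
    HasProd f (infProd f) := by
  rw [HasProd, WithPiTopology.tendsto_iff_coeff_tendsto]
  intro d
  refine tendsto_atTop_of_eventually_const (i₀ := range (d + 1)) fun s hs ↦ ?_
  have htail : X ^ (d + 1) ∣ ∏ k ∈ s \ range (d + 1), f k - 1 := by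
    refine dvd_prod_sub_one fun k hk ↦ (pow_dvd_pow X ?_).trans (hf k)
    simp only [mem_sdiff, mem_range] at hk
    omega
  rw [infProd, coeff_mk, ← prod_sdiff hs, coeff_mul_eq_of_X_pow_dvd_sub_one htail]

theorem infProd_rescale (a : ℤ) (f : ℕ → ℤ⟦X⟧) :
    infProd (fun k ↦ rescale a (f k)) = rescale a (infProd f) := by
  ext n
  simp only [infProd, coeff_mk, coeff_rescale, ← map_prod]

theorem hasProd_one_add_X_pow_of_not_four_dvd :
    HasProd (fun i ↦ if ¬ 4 ∣ i + 1 then 1 + X ^ (i + 1) else (1 : ℤ⟦X⟧))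
      (infProd (fun k ↦ 1 + X ^ (2 * k + 1)) * infProd (fun k ↦ 1 + X ^ (4 * k + 2))) := by
  have hodd := hasProd_infProd (f := fun k ↦ 1 + X ^ (2 * k + 1)) fun k ↦ by
    simpa using pow_dvd_pow X (by omega)
  have htwo := hasProd_infProd (f := fun k ↦ 1 + X ^ (4 * k + 2)) fun k ↦ by
    simpa using pow_dvd_pow X (by omega)
  -- the part `i + 1` is `2k + 1` for `i = 2k`, `4k + 2` for `i = 4k + 1`, `4k + 4` for `i = 4k + 3`
  refine HasProd.even_mul_odd ?_ (mul_one (infProd _) ▸ HasProd.even_mul_odd ?_ ?_)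
  · convert hodd using 2 with k
    rw [if_pos (by omega)]
  · convert htwo using 2 with k
    rw [if_pos (by omega)]
    ring_nf
  · convert hasProd_one with k
    rw [if_neg (by omega)]

theorem infProd_mul_infProd_eq_powerSeriesMk_Q0 :
    infProd (fun k ↦ 1 + X ^ (2 * k + 1)) * infProd (fun k ↦ 1 + X ^ (4 * k + 2)) =
      PowerSeries.mk fun n ↦ (Q0 n : ℤ) := by
  simp_rw [Q0_eq_card_restricted_inter_distincts]
  exact hasProd_one_add_X_pow_of_not_four_dvd.unique
    (Nat.Partition.hasProd_powerSeriesMk_card_restricted_inter_distincts ℤ (¬ 4 ∣ ·))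

/-- `(q;q²)_∞ (-q²;q⁴)_∞ = ∑ (-1)^n Q₀(n) qⁿ`. -/
theorem stmt_8 :
    infProd (fun k => 1 - (PowerSeries.X : PowerSeries ℤ) ^ (2 * k + 1)) *
        infProd (fun k => 1 + (PowerSeries.X : PowerSeries ℤ) ^ (4 * k + 2)) =
      PowerSeries.mk (fun n => (-1 : ℤ) ^ n * Q0 n) := by
  have hodd (k : ℕ) : 1 - X ^ (2 * k + 1) = rescale (-1 : ℤ) (1 + X ^ (2 * k + 1)) := by
    simp [rescale_X, (odd_two_mul_add_one k).neg_pow, sub_eq_add_neg]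
  have heven (k : ℕ) : 1 + X ^ (4 * k + 2) = rescale (-1 : ℤ) (1 + X ^ (4 * k + 2)) := by
    have hk : Even (4 * k + 2) := ⟨2 * k + 1, by ring⟩
    simp [rescale_X, hk.neg_pow]
  simp_rw [hodd]
  conv_lhs => enter [2, 1, k]; rw [heven]
  rw [infProd_rescale, infProd_rescale, ← map_mul, infProd_mul_infProd_eq_powerSeriesMk_Q0]
  ext n
  simp [coeff_rescale]
end

section
/- The number of partitions of n into distinct parts not divisible by 4 equals the number of partitions of n into odd parts in which no part appears more than three times. -/
open Multiset

/-- Glaisher map: odd parts stay, even parts split into two halves. -/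
def toOdd (u : Multiset ℕ) : Multiset ℕ :=
  u.bind fun x => if Odd x then {x} else Multiset.replicate 2 (x / 2)

/-- Inverse Glaisher map. -/
def toDist (t : Multiset ℕ) : Multiset ℕ :=
  ∑ m ∈ t.toFinset,
    (Multiset.replicate (t.count m % 2) m + Multiset.replicate (t.count m / 2) (2 * m))

lemma count_toOdd (u : Multiset ℕ) (y : ℕ) :
    (toOdd u).count y = (if Odd y then u.count y else 0) + 2 * u.count (2 * y) := by
  induction u using Multiset.induction_on with
  | empty => simp [toOdd]
  | cons a u ih =>
    rw [toOdd, Multiset.cons_bind, ← toOdd, Multiset.count_add, ih]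
    by_cases ha : Odd a
    · rw [if_pos ha]
      simp only [Multiset.count_cons, Multiset.count_singleton, Nat.odd_iff] at *
      split_ifs <;> omega
    · rw [if_neg ha]
      simp only [Multiset.count_cons, Multiset.count_replicate, Nat.odd_iff] at *
      split_ifs <;> omega

lemma sum_toOdd (u : Multiset ℕ) : (toOdd u).sum = u.sum := by
  induction u using Multiset.induction_on with
  | empty => simp [toOdd]
  | cons a u ih =>
    rw [toOdd, Multiset.cons_bind, ← toOdd, Multiset.sum_add, ih, Multiset.sum_cons]
    split_ifs with h
    · simp
    · rw [Nat.odd_iff] at h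
      simp only [Multiset.sum_replicate, smul_eq_mul]
      omega

lemma mem_toOdd {u : Multiset ℕ} {z : ℕ} (hz : z ∈ toOdd u) :
    ∃ x ∈ u, (Odd x ∧ z = x) ∨ (¬ Odd x ∧ z = x / 2) := by
  rw [toOdd, Multiset.mem_bind] at hz
  obtain ⟨x, hx, hzx⟩ := hz
  refine ⟨x, hx, ?_⟩
  split_ifs at hzx with h
  · simp at hzx; exact Or.inl ⟨h, hzx⟩
  · rw [Multiset.eq_of_mem_replicate hzx]
    exact Or.inr ⟨h, rfl⟩

lemma odd_of_mem_toOdd {u : Multiset ℕ} (h4 : ∀ x ∈ u, ¬ (4 ∣ x))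
    (hpos : ∀ x ∈ u, 0 < x) {z : ℕ} (hz : z ∈ toOdd u) : Odd z := by
  obtain ⟨x, hx, hc⟩ := mem_toOdd hz
  have := h4 x hx
  have := hpos x hx
  rcases hc with ⟨h1, rfl⟩ | ⟨h1, rfl⟩
  · exact h1
  · rw [Nat.odd_iff] at h1 ⊢
    omega

lemma count_toDist_odd {t : Multiset ℕ} (ht : ∀ x ∈ t, Odd x) {y : ℕ} (hy : Odd y) :
    (toDist t).count y = t.count y % 2 := by
  rw [toDist, Multiset.count_sum']
  simp only [Multiset.count_add, Multiset.count_replicate]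
  rw [Finset.sum_add_distrib]
  have h2 : ∀ m ∈ t.toFinset, (if 2 * m = y then t.count m / 2 else 0) = 0 := by
    intro m _
    rw [if_neg]
    rw [Nat.odd_iff] at hy
    omega
  rw [Finset.sum_congr rfl h2, Finset.sum_const_zero, add_zero, Finset.sum_ite_eq' t.toFinset y]
  by_cases hmem : y ∈ t.toFinset
  · rw [if_pos hmem]
  · rw [if_neg hmem]
    rw [Multiset.mem_toFinset] at hmem
    rw [Multiset.count_eq_zero_of_notMem hmem]
    simp

lemma count_toDist_even {t : Multiset ℕ} (ht : ∀ x ∈ t, Odd x) {y : ℕ} (hy : ¬ Odd y) :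
    (toDist t).count y = t.count (y / 2) / 2 := by
  rw [toDist, Multiset.count_sum']
  simp only [Multiset.count_add, Multiset.count_replicate]
  rw [Finset.sum_add_distrib]
  have h1 : ∀ m ∈ t.toFinset, (if m = y then t.count m % 2 else 0) = 0 := by
    intro m hm
    rw [if_neg]
    intro hmy
    exact hy (hmy ▸ ht m (Multiset.mem_toFinset.mp hm))
  have h2 : ∀ m ∈ t.toFinset, (if 2 * m = y then t.count m / 2 else 0)
      = (if m = y / 2 then t.count m / 2 else 0) := by
    intro m _
    rw [Nat.odd_iff] at hy
    congr 1
    apply propext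
    constructor <;> intro h <;> omega
  rw [Finset.sum_congr rfl h1, Finset.sum_const_zero, zero_add,
    Finset.sum_congr rfl h2, Finset.sum_ite_eq' t.toFinset (y / 2)]
  by_cases hmem : y / 2 ∈ t.toFinset
  · rw [if_pos hmem]
  · rw [if_neg hmem]
    rw [Multiset.mem_toFinset] at hmem
    rw [Multiset.count_eq_zero_of_notMem hmem]
    simp

lemma sum_toDist (t : Multiset ℕ) : (toDist t).sum = t.sum := by
  rw [toDist]
  rw [Multiset.sum_sum]
  have : ∀ m ∈ t.toFinset,
      (Multiset.replicate (t.count m % 2) m + Multiset.replicate (t.count m / 2) (2 * m)).sum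
        = t.count m • m := by
    intro m _
    rw [Multiset.sum_add, Multiset.sum_replicate, Multiset.sum_replicate, smul_eq_mul,
      smul_eq_mul, smul_eq_mul]
    conv_rhs => rw [← Nat.mod_add_div (t.count m) 2]
    ring
  rw [Finset.sum_congr rfl this]
  have := Finset.sum_multiset_map_count t (fun x => x)
  simpa using this.symm

lemma mem_toDist {t : Multiset ℕ} {y : ℕ} (hy : y ∈ toDist t) :
    ∃ m ∈ t, y = m ∨ y = 2 * m := by
  rw [toDist, Multiset.mem_sum] at hy
  obtain ⟨m, hm, hym⟩ := hy
  rw [Multiset.mem_add] at hym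
  refine ⟨m, Multiset.mem_toFinset.mp hm, ?_⟩
  rcases hym with h | h
  · exact Or.inl (Multiset.eq_of_mem_replicate h)
  · exact Or.inr (Multiset.eq_of_mem_replicate h)

lemma toDist_toOdd {s : Multiset ℕ} (hnd : s.Nodup) (h4 : ∀ x ∈ s, ¬ (4 ∣ x))
    (hpos : ∀ x ∈ s, 0 < x) : toDist (toOdd s) = s := by
  have hodd : ∀ x ∈ toOdd s, Odd x := fun z hz => odd_of_mem_toOdd h4 hpos hz
  have hc1 : ∀ y, s.count y ≤ 1 := Multiset.nodup_iff_count_le_one.mp hnd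
  ext y
  by_cases hy : Odd y
  · rw [count_toDist_odd hodd hy, count_toOdd, if_pos hy]
    have := hc1 y
    omega
  · rw [count_toDist_even hodd hy, count_toOdd]
    rw [Nat.odd_iff] at hy
    have h2 : 2 * (y / 2) = y := by omega
    rw [h2]
    have := hc1 (y / 2)
    split_ifs <;> omega

lemma toOdd_toDist {t : Multiset ℕ} (ht : ∀ x ∈ t, Odd x) : toOdd (toDist t) = t := by
  ext y
  rw [count_toOdd]
  have h2y : ¬ Odd (2 * y) := by rw [Nat.odd_iff]; omega
  rw [count_toDist_even ht h2y]
  have h2 : 2 * y / 2 = y := by omega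
  rw [h2]
  by_cases hy : Odd y
  · rw [if_pos hy, count_toDist_odd ht hy]
    omega
  · rw [if_neg hy]
    have : t.count y = 0 := Multiset.count_eq_zero_of_notMem (fun h => hy (ht y h))
    omega

theorem stmt_16 (n : ℕ) :
    Q0 n =
      Nat.card {p : n.Partition // (∀ x ∈ p.parts, Odd x) ∧ ∀ x, p.parts.count x ≤ 3} := by
  unfold Q0
  apply Nat.card_congr
  refine
    { toFun := fun p =>
        ⟨⟨toOdd p.1.parts,
          fun {i} hi => (mem_toOdd hi).elim ?_, by rw [sum_toOdd]; exact p.1.parts_sum⟩, ?_, ?_⟩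
      invFun := fun p =>
        ⟨⟨toDist p.1.parts, fun {i} hi => ?_, by rw [sum_toDist]; exact p.1.parts_sum⟩, ?_, ?_⟩
      left_inv := fun p => ?_
      right_inv := fun p => ?_ }
  · rintro x ⟨hx, hc | hc⟩
    · exact hc.2 ▸ p.1.parts_pos hx
    · have := p.1.parts_pos hx
      rw [Nat.odd_iff] at hc
      omega
  · exact fun x hx => odd_of_mem_toOdd p.2.2 (fun x hx => p.1.parts_pos hx) hx
  · intro x
    have hc1 := Multiset.nodup_iff_count_le_one.mp p.2.1
    rw [count_toOdd]
    have := hc1 x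
    have := hc1 (2 * x)
    split_ifs <;> omega
  · obtain ⟨m, hm, rfl | rfl⟩ := mem_toDist hi
    · exact p.1.parts_pos hm
    · have := p.1.parts_pos hm; omega
  · rw [Multiset.nodup_iff_count_le_one]
    intro y
    by_cases hy : Odd y
    · rw [count_toDist_odd p.2.1 hy]; omega
    · rw [count_toDist_even p.2.1 hy]
      have := p.2.2 (y / 2)
      omega
  · intro x hx
    obtain ⟨m, hm, rfl | rfl⟩ := mem_toDist hx
    · have := p.2.1 _ hm
      rw [Nat.odd_iff] at this
      omega
    · have := p.2.1 _ hm
      rw [Nat.odd_iff] at this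
      omega
  · exact Subtype.ext (Nat.Partition.ext (toDist_toOdd p.2.1 p.2.2 (fun x hx => p.1.parts_pos hx)))
  · exact Subtype.ext (Nat.Partition.ext (toOdd_toDist p.2.1))
end
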